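/- Let F = (W, R, R_D) be a Kripke frame where R is a preorder and the reflexive closure of R_D is the universal relation on W. Interpret □ via the Alexandroff topology of upward-closed sets for R and [≠] via the topological difference modality on the space Top(F) with selected (irreflexive) points A = {v | ¬ v R_D v}. Then for any valuation V, any point x, and any bimodal formula φ: (F,V), x ⊨ φ in Kripke semantics iff (Top(F), A, V), x ⊨ φ in the topological-with-selected-points semantics. -/

import Mathlib

inductive Formula : Type where
  | var : Nat → Formula
  | bot : Formula
  | imp : Formula → Formula → Formula
  | box : Formula → Formula
  | dbox : Formula → Formula

def Formula.neg (φ : Formula) : Formula := .imp φ .bot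
def Formula.and (φ ψ : Formula) : Formula := .neg (.imp φ (.neg ψ))
def Formula.or (φ ψ : Formula) : Formula := .imp (.neg φ) ψ
def Formula.ddiam (φ : Formula) : Formula := .neg (.dbox (.neg φ))

/-- AT0 := (p ∧ [≠]¬p ∧ ⟨≠⟩(q ∧ [≠]¬q)) → (□¬q ∨ ⟨≠⟩(q ∧ □¬p)), with p = var 0, q = var 1. -/
def AT0 : Formula :=
  .imp (.and (.and (.var 0) (.dbox (.neg (.var 0))))
             (.ddiam (.and (.var 1) (.dbox (.neg (.var 1))))))
       (.or (.box (.neg (.var 1))) (.ddiam (.and (.var 1) (.box (.neg (.var 0))))))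

/-- Kripke semantics for the bimodal language: `□` via `R`, `[≠]` via `RD`. -/
def ksat {W : Type*} (R RD : W → W → Prop) (V : Nat → Set W) : W → Formula → Prop
  | x, .var p => x ∈ V p
  | _, .bot => False
  | x, .imp φ ψ => ksat R RD V x φ → ksat R RD V x ψ
  | x, .box φ => ∀ y, R x y → ksat R RD V y φ
  | x, .dbox φ => ∀ y, RD x y → ksat R RD V y φ

/-- Topological semantics with a set `A` of selected points: `□` is interior,
`[≠]φ` holds at `x ∈ A` iff `φ` holds at every `y ≠ x`, and at `x ∉ A` iff `φ`
holds everywhere. -/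
def tsat {X : Type*} (T : TopologicalSpace X) (A : Set X) (V : Nat → Set X) :
    X → Formula → Prop
  | x, .var p => x ∈ V p
  | _, .bot => False
  | x, .imp φ ψ => tsat T A V x φ → tsat T A V x ψ
  | x, .box φ => ∃ U : Set X, T.IsOpen U ∧ x ∈ U ∧ ∀ y ∈ U, tsat T A V y φ
  | x, .dbox φ => ∀ y, (x ∈ A → y ≠ x) → tsat T A V y φ

/-- The Alexandroff topology of `R`-upward-closed sets. -/
def upTopology {W : Type*} (R : W → W → Prop) (hrefl : Reflexive R)
    (htrans : Transitive R) : TopologicalSpace W where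
  IsOpen U := ∀ x ∈ U, ∀ y, R x y → y ∈ U
  isOpen_univ := fun _ _ _ _ => trivial
  isOpen_inter := fun _ _ hU hV x hx y hxy => ⟨hU x hx.1 y hxy, hV x hx.2 y hxy⟩
  isOpen_sUnion := fun _ h x hx y hxy => by
    obtain ⟨U, hU, hxU⟩ := hx
    exact ⟨U, hU, h U hU x hxU y hxy⟩

-- The `R`-upset of `x` is the least open neighbourhood of `x`.
theorem upTopology_exists_isOpen_iff {W : Type*} {R : W → W → Prop} (hrefl : Reflexive R)
    (htrans : Transitive R) (x : W) (P : W → Prop) :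
    (∃ U : Set W, (upTopology R hrefl htrans).IsOpen U ∧ x ∈ U ∧ ∀ y ∈ U, P y) ↔
      ∀ y, R x y → P y := by
  constructor
  · rintro ⟨U, hU, hxU, hP⟩ y hxy
    exact hP y (hU x hxU y hxy)
  · intro hP
    exact ⟨{y | R x y}, fun _ hxa _ hab => htrans hxa hab, hrefl x, hP⟩

-- The `RD`-successors of `x` are all points, except `x` itself exactly when `¬ RD x x`.
theorem forall_rel_iff_forall_ne_of_rel_or_eq {W : Type*} {RD : W → W → Prop}
    (huniv : ∀ x y : W, RD x y ∨ x = y) (x : W) (P : W → Prop) :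
    (∀ y, RD x y → P y) ↔ ∀ y, (¬ RD x x → y ≠ x) → P y := by
  constructor
  · intro hP y hy
    rcases huniv x y with hxy | rfl
    · exact hP y hxy
    · by_cases hxx : RD x x
      · exact hP x hxx
      · exact absurd rfl (hy hxx)
  · intro hP y hxy
    exact hP y fun hxx => by rintro rfl; exact hxx hxy

theorem stmt2_general {W : Type*} (R RD : W → W → Prop)
    (hrefl : Reflexive R) (htrans : Transitive R)
    (huniv : ∀ x y : W, RD x y ∨ x = y) :
    ∀ (V : Nat → Set W) (x : W) (φ : Formula),
      ksat R RD V x φ ↔ tsat (upTopology R hrefl htrans) {v | ¬ RD v v} V x φ := by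
  intro V x φ
  induction φ generalizing x with
  | var p => rfl
  | bot => rfl
  | imp φ ψ ihφ ihψ => exact imp_congr (ihφ x) (ihψ x)
  | box φ ih =>
    simp only [ksat, tsat, ih]
    exact (upTopology_exists_isOpen_iff hrefl htrans x _).symm
  | dbox φ ih =>
    simp only [ksat, tsat, ih]
    exact forall_rel_iff_forall_ne_of_rel_or_eq huniv x _

/-- Kripke truth on an S4D-cone coincides with topological truth on the
Alexandroff space with selected points `{v | ¬ RD v v}`. -/
theorem stmt2 {W : Type*} (R RD : W → W → Prop)
    (hrefl : Reflexive R) (htrans : Transitive R)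
    (hsymm : Symmetric RD) (h4D : ∀ x y z : W, RD x y → RD y z → RD x z ∨ x = z)
    (hDsq : ∀ x y : W, R x y → RD x y ∨ x = y)
    (huniv : ∀ x y : W, RD x y ∨ x = y) :
    ∀ (V : Nat → Set W) (x : W) (φ : Formula),
      ksat R RD V x φ ↔ tsat (upTopology R hrefl htrans) {v | ¬ RD v v} V x φ :=
  stmt2_general R RD hrefl htrans huniv
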